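/- Let μ be a Borel probability measure on a Euclidean space X satisfying the logarithmic Sobolev inequality with constant ρ > 0. Then for any two Lipschitz functions f : X → [0,∞) and g : X → ℝ, the covariance satisfies |Cov_μ(f,g)| ≤ (‖∇g‖_{L^∞(μ)} / ρ) · sqrt( (∫ f dμ) · (∫ |∇f|²/f dμ) ). -/

import Mathlib

open MeasureTheory Real

variable {X : Type*} [NormedAddCommGroup X] [InnerProductSpace ℝ X] [CompleteSpace X]
  [MeasurableSpace X] [BorelSpace X]

/-- A probability measure `μ` on a Euclidean space satisfies the logarithmic Sobolev
inequality with constant `ρ`. -/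
def LSI (μ : Measure X) (ρ : ℝ) : Prop :=
  ∀ f : X → ℝ, (∀ x, 0 ≤ f x) → LocallyLipschitz f → Integrable f μ →
    ∫ x, f x * Real.log (f x) ∂μ - (∫ x, f x ∂μ) * Real.log (∫ x, f x ∂μ)
      ≤ (1 / (2 * ρ)) * ∫ x, ‖gradient f x‖ ^ 2 / f x ∂μ

/-!
For bounded `f` and `g`, put `φ = g - ∫ g`, `a = ∫ f`, `I = ∫ ‖∇ f‖² / f`, and let `M` bound
`‖∇ g‖`. Entropy duality gives `s Cov(f, g) = ∫ f (s φ) ≤ Ent f + a log ∫ exp (s φ)` for every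
real `s`. The LSI bounds `Ent f` by `I / (2ρ)`, and Herbst's argument bounds `log ∫ exp (s φ)` by
`M² s² / (2ρ)`: the LSI applied to `exp (s φ)` is the differential inequality
`s u' - u ≤ M² s² / (2ρ)` for `u s = log ∫ exp (s φ)`, and `u 0 = u' 0 = 0`. Hence the quadratic
`I / (2ρ) - s Cov(f, g) + a M² s² / (2ρ)` is nonnegative, and its discriminant gives
`Cov(f, g)² ≤ (M / ρ)² a I`.

The general case follows by truncating `f` to `min f n` and `g` to `[-n, n]`: truncation
increases neither `‖∇ g‖` nor `‖∇ f‖² / f`, and dominated convergence passes to the limit.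
-/

open Filter Topology ProbabilityTheory
open scoped Gradient

section RealAnalysis

lemma mul_le_mul_log_sub_add_exp {u : ℝ} (hu : 0 ≤ u) (v : ℝ) :
    u * v ≤ u * log u - u + exp v := by
  rcases hu.eq_or_lt with rfl | hu
  · simpa using (exp_pos v).le
  · have h := add_one_le_exp (v - log u)
    rw [exp_sub, exp_log hu, le_div_iff₀ hu] at h
    linarith

lemma sq_le_four_mul_of_forall_mul_le {C P Q : ℝ} (h : ∀ s, s * C ≤ P + Q * s ^ 2) :
    C ^ 2 ≤ 4 * Q * P := by
  have := discrim_le_zero (a := Q) (b := -C) (c := P) fun s => by nlinarith [h s]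
  rw [discrim, neg_sq] at this
  linarith

lemma le_mul_sq_of_hasDerivAt_of_pos {u u' : ℝ → ℝ} {c : ℝ} (hu : ∀ t, HasDerivAt u (u' t) t)
    (hu0 : u 0 = 0) (hu'0 : u' 0 = 0) (h : ∀ t, t * u' t - u t ≤ c * t ^ 2) {s : ℝ}
    (hs : 0 < s) : u s ≤ c * s ^ 2 := by
  set w : ℝ → ℝ := fun t => u t / t - c * t
  have hw : ∀ t ≠ 0, HasDerivAt w ((u' t * t - u t) / t ^ 2 - c) t := fun t ht => by
    simpa only [mul_one] using
      ((hu t).fun_div (hasDerivAt_id' t) ht).fun_sub ((hasDerivAt_id' t).const_mul c)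
  have hanti : AntitoneOn w (Set.Ioi 0) := by
    refine antitoneOn_of_deriv_nonpos (convex_Ioi 0) ?_ ?_ ?_
    · exact fun t ht => (hw t (ne_of_gt ht)).continuousAt.continuousWithinAt
    · rw [interior_Ioi]
      exact fun t ht => (hw t (ne_of_gt ht)).differentiableAt.differentiableWithinAt
    · rw [interior_Ioi]
      intro t ht
      rw [(hw t (ne_of_gt ht)).deriv, sub_nonpos, div_le_iff₀ (pow_pos ht 2)]
      linarith [h t]
  -- near `0`, `u t / t` is a difference quotient of `u` at `0`, hence tends to `u' 0 = 0`
  have hlim : Tendsto w (𝓝[>] 0) (𝓝 0) := by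
    have hslope := (hasDerivAt_iff_tendsto_slope.mp (hu 0)).mono_left (nhdsGT_le_nhdsNE 0)
    have hlin : Tendsto (fun t : ℝ => c * t) (𝓝[>] 0) (𝓝 0) :=
      ((continuous_const.mul continuous_id).tendsto' 0 0 (by simp)).mono_left nhdsWithin_le_nhds
    have := hslope.sub hlin
    rw [hu'0, sub_zero] at this
    refine this.congr' (eventually_of_mem self_mem_nhdsWithin fun t _ => ?_)
    simp [slope_def_field, hu0, w]
  have hws : w s ≤ 0 := ge_of_tendsto hlim <| eventually_of_mem (Ioc_mem_nhdsGT hs)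
    fun t ht => hanti ht.1 hs ht.2
  have : u s / s ≤ c * s := by simpa [w, sub_nonpos] using hws
  rw [div_le_iff₀ hs] at this
  linarith

theorem le_mul_sq_of_hasDerivAt {u u' : ℝ → ℝ} {c : ℝ} (hu : ∀ t, HasDerivAt u (u' t) t)
    (hu0 : u 0 = 0) (hu'0 : u' 0 = 0) (h : ∀ t, t * u' t - u t ≤ c * t ^ 2) (t : ℝ) :
    u t ≤ c * t ^ 2 := by
  rcases lt_trichotomy t 0 with ht | rfl | ht
  · have hrefl := le_mul_sq_of_hasDerivAt_of_pos (u := fun t => u (-t)) (u' := fun t => -u' (-t))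
      (fun t => by simpa [Function.comp_def] using (hu (-t)).comp t (hasDerivAt_neg t))
      (by simpa using hu0) (by simpa using hu'0)
      (fun t => by simpa using h (-t)) (neg_pos.mpr ht)
    simpa using hrefl
  · simpa using hu0.le
  · exact le_mul_sq_of_hasDerivAt_of_pos hu hu0 hu'0 h ht

lemma abs_clamp_le (r : ℝ) {c : ℝ} (hc : 0 ≤ c) : |max (min r c) (-c)| ≤ c :=
  abs_le.mpr ⟨le_max_right _ _, max_le (min_le_right _ _) (by linarith)⟩

lemma abs_clamp_le_abs (r : ℝ) {c : ℝ} (hc : 0 ≤ c) : |max (min r c) (-c)| ≤ |r| :=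
  abs_le.mpr ⟨le_max_of_le_left (le_min (neg_abs_le r) ((neg_nonpos.mpr (abs_nonneg r)).trans hc)),
    max_le ((min_le_left _ _).trans (le_abs_self r)) ((neg_nonpos.mpr hc).trans (abs_nonneg r))⟩

lemma tendsto_min_natCast_atTop (r : ℝ) : Tendsto (fun n : ℕ => min r n) atTop (𝓝 r) :=
  tendsto_const_nhds.congr' <| (tendsto_natCast_atTop_atTop.eventually_ge_atTop r).mono
    fun _ hn => (min_eq_left hn).symm

lemma tendsto_clamp_natCast_atTop (r : ℝ) :
    Tendsto (fun n : ℕ => max (min r n) (-n)) atTop (𝓝 r) :=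
  tendsto_const_nhds.congr' <| (tendsto_natCast_atTop_atTop.eventually_ge_atTop |r|).mono
    fun _ hn => by
      dsimp only
      rw [min_eq_left ((le_abs_self r).trans hn),
        max_eq_left (neg_le.mpr ((neg_le_abs r).trans hn))]

end RealAnalysis

section Gradient

variable {E : Type*} [NormedAddCommGroup E] [InnerProductSpace ℝ E] [CompleteSpace E]
  {f : E → ℝ} {x : E} {c : ℝ}

lemma IsLocalMax.gradient_eq_zero (h : IsLocalMax f x) : ∇ f x = 0 := by
  simp [gradient, h.fderiv_eq_zero]

lemma IsLocalMin.gradient_eq_zero (h : IsLocalMin f x) : ∇ f x = 0 := by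
  simp [gradient, h.fderiv_eq_zero]

lemma gradient_min_const_of_lt (hf : ContinuousAt f x) (h : f x < c) :
    ∇ (fun y => min (f y) c) x = ∇ f x :=
  Filter.EventuallyEq.gradient_eq <| (hf.eventually_lt_const h).mono fun _ hy => min_eq_left hy.le

lemma gradient_min_const_of_le (h : c ≤ f x) : ∇ (fun y => min (f y) c) x = 0 :=
  IsLocalMax.gradient_eq_zero <| Eventually.of_forall fun _ => by
    simp only [min_eq_right h, min_le_right]

lemma gradient_max_const_of_lt (hf : ContinuousAt f x) (h : c < f x) :
    ∇ (fun y => max (f y) c) x = ∇ f x :=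
  Filter.EventuallyEq.gradient_eq <| (hf.eventually_const_lt h).mono fun _ hy => max_eq_left hy.le

lemma gradient_max_const_of_le (h : f x ≤ c) : ∇ (fun y => max (f y) c) x = 0 :=
  IsLocalMin.gradient_eq_zero <| Eventually.of_forall fun _ => by
    simp only [max_eq_right h, le_max_right]

lemma norm_gradient_min_const_le (hf : ContinuousAt f x) (c : ℝ) :
    ‖∇ (fun y => min (f y) c) x‖ ≤ ‖∇ f x‖ := by
  rcases lt_or_ge (f x) c with h | h
  · rw [gradient_min_const_of_lt hf h]
  · simp [gradient_min_const_of_le h]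

lemma norm_gradient_max_const_le (hf : ContinuousAt f x) (c : ℝ) :
    ‖∇ (fun y => max (f y) c) x‖ ≤ ‖∇ f x‖ := by
  rcases lt_or_ge c (f x) with h | h
  · rw [gradient_max_const_of_lt hf h]
  · simp [gradient_max_const_of_le h]

lemma norm_gradient_clamp_le (hf : ContinuousAt f x) (c : ℝ) :
    ‖∇ (fun y => max (min (f y) c) (-c)) x‖ ≤ ‖∇ f x‖ :=
  (norm_gradient_max_const_le (hf.min continuousAt_const) _).trans
    (norm_gradient_min_const_le hf c)

lemma norm_sq_gradient_min_const_div_le (hf : ContinuousAt f x) (hfx : 0 ≤ f x) (c : ℝ) :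
    ‖∇ (fun y => min (f y) c) x‖ ^ 2 / min (f x) c ≤ ‖∇ f x‖ ^ 2 / f x := by
  rcases lt_or_ge (f x) c with h | h
  · rw [gradient_min_const_of_lt hf h, min_eq_left h.le]
  · rw [gradient_min_const_of_le h, norm_zero, zero_pow two_ne_zero, zero_div]
    positivity

lemma gradient_sub_const : ∇ (fun y => f y - c) x = ∇ f x := by
  simp only [gradient, fderiv_sub_const]

lemma gradient_exp_mul (φ : E → ℝ) (t : ℝ) (x : E) :
    ∇ (fun y => exp (t * φ y)) x = (t * exp (t * φ x)) • ∇ φ x := by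
  rcases eq_or_ne t 0 with rfl | ht
  · simp
  by_cases hφ : DifferentiableAt ℝ φ x
  · have h := (hφ.hasFDerivAt.const_mul t).exp
    rw [gradient, h.fderiv, gradient, smul_smul, ← map_smul, mul_comm]
  -- `φ = t⁻¹ * log (exp (t * φ))`, so `exp (t * φ)` cannot be differentiable at `x` either
  · have hexp : ¬ DifferentiableAt ℝ (fun y => exp (t * φ y)) x := fun h => hφ <| by
      simpa [log_exp, inv_mul_cancel_left₀ ht] using (h.log (exp_ne_zero _)).const_mul t⁻¹
    simp [gradient_eq_zero_of_not_differentiableAt hφ,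
      gradient_eq_zero_of_not_differentiableAt hexp]

end Gradient

section Integration

variable {Ω : Type*} [MeasurableSpace Ω] {μ : Measure Ω}

noncomputable def entropy (μ : Measure Ω) (f : Ω → ℝ) : ℝ :=
  ∫ x, f x * log (f x) ∂μ - (∫ x, f x ∂μ) * log (∫ x, f x ∂μ)

theorem integral_mul_le_entropy_add_mul_log_integral_exp {f h : Ω → ℝ} (hf0 : ∀ x, 0 ≤ f x)
    (hf : Integrable f μ) (hflog : Integrable (fun x => f x * log (f x)) μ)
    (hfh : Integrable (fun x => f x * h x) μ) (hexp : Integrable (fun x => exp (h x)) μ)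
    (ha : 0 < ∫ x, f x ∂μ) :
    ∫ x, f x * h x ∂μ ≤ entropy μ f + (∫ x, f x ∂μ) * log (∫ x, exp (h x) ∂μ) := by
  set a := ∫ x, f x ∂μ
  set b := ∫ x, exp (h x) ∂μ
  have : NeZero μ := ⟨by rintro rfl; simp [a] at ha⟩
  have hb : 0 < b := integral_exp_pos hexp
  -- Young's inequality `u v ≤ u log u - u + exp v` at `u = f x`, `v = h x + log (a / b)`
  have hpt : ∀ x, f x * h x + f x * log (a / b) ≤ f x * log (f x) - f x + a / b * exp (h x) :=
    fun x => by
      have := mul_le_mul_log_sub_add_exp (hf0 x) (h x + log (a / b))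
      rwa [exp_add, exp_log (div_pos ha hb), mul_add, mul_comm (exp _)] at this
  have hint : ∫ x, (f x * h x + f x * log (a / b)) ∂μ
      ≤ ∫ x, (f x * log (f x) - f x + a / b * exp (h x)) ∂μ :=
    integral_mono (hfh.add (hf.mul_const _)) ((hflog.sub hf).add (hexp.const_mul _)) hpt
  rw [integral_add hfh (hf.mul_const _),
    integral_add (f := fun x => f x * log (f x) - f x) (hflog.sub hf) (hexp.const_mul _),
    integral_sub hflog hf, integral_mul_const, integral_const_mul, div_mul_cancel₀ _ hb.ne',
    log_div ha.ne' hb.ne'] at hint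
  rw [entropy]
  linarith

lemma integrable_mul_log_of_le {f : Ω → ℝ} [IsFiniteMeasure μ] (hf : AEStronglyMeasurable f μ)
    {m : ℝ} (hf0 : ∀ x, 0 ≤ f x) (hfm : ∀ x, f x ≤ m) :
    Integrable (fun x => f x * log (f x)) μ := by
  obtain ⟨C, hC⟩ := isCompact_Icc.exists_bound_of_continuousOn continuous_mul_log.continuousOn
    (s := Set.Icc 0 m)
  exact .of_bound (continuous_mul_log.comp_aestronglyMeasurable hf) C
    (ae_of_all _ fun x => hC _ ⟨hf0 x, hfm x⟩)

lemma integrable_exp_mul_of_forall_abs_le [IsFiniteMeasure μ] {φ : Ω → ℝ}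
    (hφ : AEStronglyMeasurable φ μ) {B : ℝ} (hB : ∀ x, |φ x| ≤ B) (t : ℝ) :
    Integrable (fun x => exp (t * φ x)) μ :=
  .of_bound (continuous_exp.comp_aestronglyMeasurable (hφ.const_mul t)) (exp (|t| * B)) <|
    ae_of_all _ fun x => by
      rw [norm_of_nonneg (exp_pos _).le, exp_le_exp]
      exact (le_abs_self _).trans (abs_mul t _ ▸ mul_le_mul_of_nonneg_left (hB x) (abs_nonneg t))

theorem tendsto_covariance_of_dominated {F G : ℕ → Ω → ℝ} {f g : Ω → ℝ}
    (hF : ∀ n, AEStronglyMeasurable (F n) μ) (hG : ∀ n, AEStronglyMeasurable (G n) μ)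
    (hf : Integrable f μ) (hg : Integrable g μ) (hfg : Integrable (fun x => f x * g x) μ)
    (hFf : ∀ n, ∀ᵐ x ∂μ, ‖F n x‖ ≤ ‖f x‖) (hGg : ∀ n, ∀ᵐ x ∂μ, ‖G n x‖ ≤ ‖g x‖)
    (hFlim : ∀ᵐ x ∂μ, Tendsto (F · x) atTop (𝓝 (f x)))
    (hGlim : ∀ᵐ x ∂μ, Tendsto (G · x) atTop (𝓝 (g x))) :
    Tendsto (fun n => ∫ x, F n x * G n x ∂μ - (∫ x, F n x ∂μ) * ∫ x, G n x ∂μ) atTop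
      (𝓝 (∫ x, f x * g x ∂μ - (∫ x, f x ∂μ) * ∫ x, g x ∂μ)) := by
  have hFG := tendsto_integral_of_dominated_convergence (fun x => ‖f x * g x‖)
    (fun n => (hF n).mul (hG n)) hfg.norm
    (fun n => by
      filter_upwards [hFf n, hGg n] with x h1 h2
      rw [norm_mul, Pi.mul_apply, norm_mul]
      exact mul_le_mul h1 h2 (norm_nonneg _) (norm_nonneg _))
    (by filter_upwards [hFlim, hGlim] with x h1 h2 using h1.mul h2)
  exact hFG.sub <| (tendsto_integral_of_dominated_convergence _ hF hf.norm hFf hFlim).mul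
    (tendsto_integral_of_dominated_convergence _ hG hg.norm hGg hGlim)

end Integration

namespace LSI

variable {E : Type*} [NormedAddCommGroup E] [InnerProductSpace ℝ E] [CompleteSpace E]
  [MeasurableSpace E] {μ : Measure E} {ρ : ℝ}

lemma entropy_exp_mul_le (hLSI : LSI μ ρ) (hρ : 0 < ρ) {φ : E → ℝ} (hφ : LocallyLipschitz φ)
    {M : ℝ} (hM : ∀ᵐ x ∂μ, ‖∇ φ x‖ ≤ M) {t : ℝ} (hint : Integrable (fun x => exp (t * φ x)) μ) :
    entropy μ (fun x => exp (t * φ x)) ≤ t ^ 2 * M ^ 2 / (2 * ρ) * mgf φ μ t := by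
  have hlip : LocallyLipschitz fun x => exp (t * φ x) :=
    (contDiff_exp.comp (contDiff_const.mul contDiff_id)).locallyLipschitz.comp hφ
  have hfisher : ∀ᵐ x ∂μ, ‖∇ (fun y => exp (t * φ y)) x‖ ^ 2 / exp (t * φ x)
      ≤ t ^ 2 * M ^ 2 * exp (t * φ x) := by
    filter_upwards [hM] with x hx
    have hsq : ‖∇ φ x‖ ^ 2 ≤ M ^ 2 := pow_le_pow_left₀ (norm_nonneg _) hx 2
    rw [gradient_exp_mul, norm_smul, norm_mul, norm_of_nonneg (exp_pos _).le, norm_eq_abs,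
      div_le_iff₀ (exp_pos _)]
    calc (|t| * exp (t * φ x) * ‖∇ φ x‖) ^ 2 = t ^ 2 * ‖∇ φ x‖ ^ 2 * exp (t * φ x) ^ 2 := by
          rw [mul_pow, mul_pow, sq_abs]; ring
      _ ≤ t ^ 2 * M ^ 2 * exp (t * φ x) ^ 2 := by gcongr
      _ = _ := by ring
  calc entropy μ (fun x => exp (t * φ x))
      ≤ 1 / (2 * ρ) * ∫ x, ‖∇ (fun y => exp (t * φ y)) x‖ ^ 2 / exp (t * φ x) ∂μ :=
        hLSI _ (fun _ => (exp_pos _).le) hlip hint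
    _ ≤ 1 / (2 * ρ) * ∫ x, t ^ 2 * M ^ 2 * exp (t * φ x) ∂μ := by
        refine mul_le_mul_of_nonneg_left ?_ (by positivity)
        exact integral_mono_of_nonneg (ae_of_all _ fun _ => by positivity) (hint.const_mul _)
          hfisher
    _ = t ^ 2 * M ^ 2 / (2 * ρ) * mgf φ μ t := by
        rw [integral_const_mul, mgf]
        ring

theorem hasSubgaussianMGF [BorelSpace E] [IsProbabilityMeasure μ] (hLSI : LSI μ ρ) (hρ : 0 < ρ)
    {φ : E → ℝ} (hφ : LocallyLipschitz φ) {B : ℝ} (hB : ∀ x, |φ x| ≤ B) {M : ℝ}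
    (hM : ∀ᵐ x ∂μ, ‖∇ φ x‖ ≤ M) (hmean : ∫ x, φ x ∂μ = 0) :
    HasSubgaussianMGF φ (M ^ 2 / ρ).toNNReal μ := by
  have hint := integrable_exp_mul_of_forall_abs_le hφ.continuous.aestronglyMeasurable hB (μ := μ)
  have hmgf : ∀ t, HasDerivAt (mgf φ μ) μ[fun x => φ x * exp (t * φ x)] t := fun t =>
    hasDerivAt_mgf <| by simp [integrableExpSet, hint]
  refine ⟨hint, fun t => ?_⟩
  have hcgf : cgf φ μ t ≤ M ^ 2 / (2 * ρ) * t ^ 2 := by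
    refine le_mul_sq_of_hasDerivAt (u := cgf φ μ) (fun t => (hmgf t).log (mgf_pos (hint t)).ne')
      cgf_zero (by simp [hmean]) (fun t => ?_) t
    have hent := entropy_exp_mul_le hLSI hρ hφ hM (hint t)
    have hH := mgf_pos (hint t)
    have hD : ∫ x, exp (t * φ x) * (t * φ x) ∂μ = t * μ[fun x => φ x * exp (t * φ x)] := by
      rw [← integral_const_mul]
      congr with x
      ring
    simp only [entropy, log_exp, hD] at hent
    simp only [cgf, mgf] at hH hent ⊢
    rw [mul_div_assoc', sub_le_iff_le_add, div_le_iff₀ hH]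
    linear_combination hent
  rw [← exp_cgf (hint t), exp_le_exp, Real.coe_toNNReal _ (by positivity)]
  exact hcgf.trans_eq (by ring)

theorem mul_covariance_le [BorelSpace E] [IsProbabilityMeasure μ] (hLSI : LSI μ ρ)
    (hρ : 0 < ρ) {f g : E → ℝ} (hf0 : ∀ x, 0 ≤ f x) (hf : LocallyLipschitz f)
    (hg : LocallyLipschitz g) {m B M : ℝ} (hfm : ∀ x, f x ≤ m) (hgB : ∀ x, |g x| ≤ B)
    (hM : ∀ᵐ x ∂μ, ‖∇ g x‖ ≤ M) (ha : 0 < ∫ x, f x ∂μ) (s : ℝ) :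
    s * (∫ x, f x * g x ∂μ - (∫ x, f x ∂μ) * ∫ x, g x ∂μ)
      ≤ (∫ x, ‖∇ f x‖ ^ 2 / f x ∂μ) / (2 * ρ) + (∫ x, f x ∂μ) * M ^ 2 / (2 * ρ) * s ^ 2 := by
  have hfint : Integrable f μ := .of_bound hf.continuous.aestronglyMeasurable m <|
    ae_of_all _ fun x => (norm_of_nonneg (hf0 x)).trans_le (hfm x)
  have hgmeas := hg.continuous.aestronglyMeasurable (μ := μ)
  have hgB' : ∀ᵐ x ∂μ, ‖g x‖ ≤ B := ae_of_all _ fun x => (norm_eq_abs (g x)).trans_le (hgB x)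
  have hgint : Integrable g μ := .of_bound hgmeas B hgB'
  set φ := fun x => g x - ∫ y, g y ∂μ
  have hφB : ∀ x, |φ x| ≤ 2 * B := fun x => by
    have : |∫ y, g y ∂μ| ≤ B := by simpa using norm_integral_le_of_norm_le_const hgB'
    exact (abs_sub _ _).trans (by linarith [hgB x])
  have hφ : HasSubgaussianMGF φ (M ^ 2 / ρ).toNNReal μ :=
    hLSI.hasSubgaussianMGF hρ (hg.sub (.const _)) hφB
      (hM.mono fun x hx => by rwa [gradient_sub_const]) (by simp [integral_sub hgint])
  have hsφ : ∀ᵐ x ∂μ, ‖s * φ x‖ ≤ |s| * (2 * B) := ae_of_all _ fun x =>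
    (abs_mul s (φ x)).trans_le (mul_le_mul_of_nonneg_left (hφB x) (abs_nonneg s))
  calc _ = ∫ x, (s * (f x * g x) - s * (∫ y, g y ∂μ) * f x) ∂μ := by
        rw [integral_sub ((hfint.mul_bdd hgmeas hgB').const_mul s) (hfint.const_mul _),
          integral_const_mul, integral_const_mul]
        ring
    _ = ∫ x, f x * (s * φ x) ∂μ := by
        congr with x
        ring
    _ ≤ entropy μ f + (∫ x, f x ∂μ) * cgf φ μ s :=
        integral_mul_le_entropy_add_mul_log_integral_exp hf0 hfint
          (integrable_mul_log_of_le hf.continuous.aestronglyMeasurable hf0 hfm)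
          (hfint.mul_bdd ((hg.continuous.sub continuous_const).const_mul s).aestronglyMeasurable
            hsφ)
          (hφ.integrable_exp_mul s) ha
    _ ≤ 1 / (2 * ρ) * (∫ x, ‖∇ f x‖ ^ 2 / f x ∂μ) + (∫ x, f x ∂μ) * (M ^ 2 / ρ * s ^ 2 / 2) := by
        gcongr
        · exact hLSI f hf0 hf hfint
        · simpa [Real.coe_toNNReal _ (by positivity : 0 ≤ M ^ 2 / ρ)] using hφ.cgf_le s
    _ = _ := by ring

theorem abs_covariance_le_of_bounded [BorelSpace E] [IsProbabilityMeasure μ] (hLSI : LSI μ ρ)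
    (hρ : 0 < ρ) {f g : E → ℝ} (hf0 : ∀ x, 0 ≤ f x) (hf : LocallyLipschitz f)
    (hg : LocallyLipschitz g) {m B M : ℝ} (hfm : ∀ x, f x ≤ m) (hgB : ∀ x, |g x| ≤ B)
    (hM : ∀ᵐ x ∂μ, ‖∇ g x‖ ≤ M) :
    |∫ x, f x * g x ∂μ - (∫ x, f x ∂μ) * ∫ x, g x ∂μ|
      ≤ M / ρ * √((∫ x, f x ∂μ) * ∫ x, ‖∇ f x‖ ^ 2 / f x ∂μ) := by
  have hM0 : 0 ≤ M := (norm_nonneg _).trans hM.exists.choose_spec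
  have hI0 : 0 ≤ ∫ x, ‖∇ f x‖ ^ 2 / f x ∂μ :=
    integral_nonneg fun x => div_nonneg (sq_nonneg _) (hf0 x)
  rcases (integral_nonneg hf0 : 0 ≤ ∫ x, f x ∂μ).eq_or_lt with ha | ha
  · have hfint : Integrable f μ := .of_bound hf.continuous.aestronglyMeasurable m <|
      ae_of_all _ fun x => (norm_of_nonneg (hf0 x)).trans_le (hfm x)
    have hf_ae : f =ᵐ[μ] 0 := (integral_eq_zero_iff_of_nonneg hf0 hfint).mp ha.symm
    rw [integral_eq_zero_of_ae (hf_ae.mono fun x hx => by simp [hx]), ← ha, zero_mul, sub_zero,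
      abs_zero]
    positivity
  have hsq := sq_le_four_mul_of_forall_mul_le (mul_covariance_le hLSI hρ hf0 hf hg hfm hgB hM ha)
  refine abs_le_of_sq_le_sq (hsq.trans_eq ?_) (by positivity)
  rw [mul_pow, sq_sqrt (by positivity)]
  field_simp
  ring

theorem abs_covariance_min_clamp_le [BorelSpace E] [IsProbabilityMeasure μ] (hLSI : LSI μ ρ)
    (hρ : 0 < ρ) {f g : E → ℝ} (hf0 : ∀ x, 0 ≤ f x) (hf : LocallyLipschitz f)
    (hg : LocallyLipschitz g) (hfint : Integrable f μ)
    (hfisher : Integrable (fun x => ‖∇ f x‖ ^ 2 / f x) μ) {M : ℝ} (hM : ∀ᵐ x ∂μ, ‖∇ g x‖ ≤ M)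
    {c : ℝ} (hc : 0 ≤ c) :
    |∫ x, min (f x) c * max (min (g x) c) (-c) ∂μ
        - (∫ x, min (f x) c ∂μ) * ∫ x, max (min (g x) c) (-c) ∂μ|
      ≤ M / ρ * √((∫ x, f x ∂μ) * ∫ x, ‖∇ f x‖ ^ 2 / f x ∂μ) := by
  have hM0 : 0 ≤ M := (norm_nonneg _).trans hM.exists.choose_spec
  have hF0 : ∀ x, 0 ≤ min (f x) c := fun x => le_min (hf0 x) hc
  have hmass : ∫ x, min (f x) c ∂μ ≤ ∫ x, f x ∂μ :=
    integral_mono_of_nonneg (ae_of_all _ hF0) hfint (ae_of_all _ fun x => min_le_left _ _)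
  have hfisher_le : ∫ x, ‖∇ (fun y => min (f y) c) x‖ ^ 2 / min (f x) c ∂μ
      ≤ ∫ x, ‖∇ f x‖ ^ 2 / f x ∂μ :=
    integral_mono_of_nonneg (ae_of_all _ fun x => div_nonneg (sq_nonneg _) (hF0 x)) hfisher
      (ae_of_all _ fun x => norm_sq_gradient_min_const_div_le hf.continuous.continuousAt (hf0 x) c)
  refine (hLSI.abs_covariance_le_of_bounded hρ hF0 (hf.min (.const _))
    ((hg.min (.const _)).max (.const _)) (fun x => min_le_right _ _) (fun x => abs_clamp_le _ hc)
    (hM.mono fun x hx => (norm_gradient_clamp_le hg.continuous.continuousAt c).trans hx)).trans ?_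
  gcongr
  · exact integral_nonneg fun x => div_nonneg (sq_nonneg _) (hF0 x)
  · exact integral_nonneg hf0

end LSI

/-- covariance estimate under a logarithmic Sobolev inequality. -/
theorem covariance_estimate_of_LSI (μ : Measure X) [IsProbabilityMeasure μ]
    (ρ : ℝ) (hρ : 0 < ρ) (hLSI : LSI μ ρ)
    (f g : X → ℝ) (hf0 : ∀ x, 0 ≤ f x)
    (Lf Lg : NNReal) (hfL : LipschitzWith Lf f) (hgL : LipschitzWith Lg g)
    (Mg : ℝ) (hMg : ∀ᵐ x ∂μ, ‖gradient g x‖ ≤ Mg)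
    (hfint : Integrable f μ) (hgint : Integrable g μ)
    (hfg : Integrable (fun x => f x * g x) μ)
    (hgradf : Integrable (fun x => ‖gradient f x‖ ^ 2 / f x) μ) :
    |∫ x, f x * g x ∂μ - (∫ x, f x ∂μ) * ∫ x, g x ∂μ|
      ≤ (Mg / ρ) * Real.sqrt ((∫ x, f x ∂μ) * ∫ x, ‖gradient f x‖ ^ 2 / f x ∂μ) := by
  refine le_of_tendsto (tendsto_covariance_of_dominated
    (fun n => (hfL.continuous.min continuous_const).aestronglyMeasurable)
    (fun n => ((hgL.continuous.min continuous_const).max continuous_const).aestronglyMeasurable)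
    hfint hgint hfg (fun n => ae_of_all _ fun x => ?_)
    (fun n => ae_of_all _ fun x => abs_clamp_le_abs (g x) n.cast_nonneg)
    (ae_of_all _ fun x => tendsto_min_natCast_atTop (f x))
    (ae_of_all _ fun x => tendsto_clamp_natCast_atTop (g x))).abs
    (Eventually.of_forall fun n => hLSI.abs_covariance_min_clamp_le hρ hf0 hfL.locallyLipschitz
      hgL.locallyLipschitz hfint hgradf hMg n.cast_nonneg)
  rw [norm_of_nonneg (le_min (hf0 x) n.cast_nonneg), norm_of_nonneg (hf0 x)]
  exact min_le_left _ _
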